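/- arXiv:2301.12964 — 4 statements merged into one kernel-verified Lean document; each statement's English description precedes it below -/
import Mathlib

section
/- Let k ≥ 2 and s be a positive integer. Every k-evenoid positive integer y with y < k^s can be written as a sum of k k-oddoid positive integers, each strictly less than k^{s−1}. -/
/-- A positive integer is `k`-oddoid if its remainder modulo `k * (k - 1)`
lies between `1` and `k - 1` (inclusive); otherwise it is `k`-evenoid. -/
def Oddoid (k x : ℕ) : Prop :=
  1 ≤ x % (k * (k - 1)) ∧ x % (k * (k - 1)) ≤ k - 1

lemma sum_min_aux (c d n : ℕ) :
    ∑ i ∈ Finset.range n, min c (d - c * i) = min d (c * n) := by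
  induction n with
  | zero => simp
  | succ n ih =>
    rw [Finset.sum_range_succ, ih, Nat.mul_succ]
    omega

lemma pow_aux (k : ℕ) (hk : 1 ≤ k) : ∀ n, 1 ≤ n → ∃ c, k ^ n = k + k * (k - 1) * c := by
  intro n hn
  induction n with
  | zero => omega
  | succ n ih =>
    rcases Nat.eq_zero_or_pos n with h | h
    · subst h; exact ⟨0, by simp⟩
    · obtain ⟨c, hc⟩ := ih h
      refine ⟨1 + k * c, ?_⟩
      have hkk : k * k = k + k * (k - 1) := by
        cases k with
        | zero => simp
        | succ j => simp [Nat.succ_sub_one]; ring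
      calc k ^ (n+1) = k * k ^ n := by ring
        _ = k * (k + k*(k-1)*c) := by rw [hc]
        _ = k * k + k*(k-1)*(k*c) := by ring
        _ = k + k*(k-1)*(1 + k*c) := by rw [hkk]; ring

lemma build (k y m c T R P : ℕ) (ρ : ℕ → ℕ) (hk : 2 ≤ k) (hm : m = k * (k - 1))
    (hρ : ∀ i, i < k → 1 ≤ ρ i ∧ ρ i ≤ k - 1)
    (hR : ∑ i ∈ Finset.range k, ρ i = R)
    (hy : y = R + m * T)
    (hT : T ≤ c * k)
    (hP : P = k + m * c) :
    ∃ f : Fin k → ℕ, (∀ i, Oddoid k (f i) ∧ f i < P) ∧ ∑ i, f i = y := by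
  have hmk : k - 1 < m := by
    have : 2 * (k-1) ≤ k * (k-1) := Nat.mul_le_mul_right _ hk
    omega
  refine ⟨fun i => ρ i + m * min c (T - c * i.val), ?_, ?_⟩
  · intro i
    obtain ⟨h1, h2⟩ := hρ i i.isLt
    have hmin : min c (T - c * i.val) ≤ c := min_le_left _ _
    have hmod : (ρ i + m * min c (T - c * i.val)) % m = ρ i := by
      rw [Nat.add_mul_mod_self_left, Nat.mod_eq_of_lt (by omega)]
    constructor
    · unfold Oddoid
      rw [← hm, hmod]
      exact ⟨h1, h2⟩
    · have hmul : m * min c (T - c * i.val) ≤ m * c := Nat.mul_le_mul_left m hmin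
      show ρ i.val + m * min c (T - c * i.val) < P
      omega
  · calc ∑ i : Fin k, (ρ i.val + m * min c (T - c * i.val))
        = ∑ i ∈ Finset.range k, (ρ i + m * min c (T - c * i)) :=
          Fin.sum_univ_eq_sum_range (fun j => ρ j + m * min c (T - c * j)) k
      _ = y := by
          rw [Finset.sum_add_distrib, hR, ← Finset.mul_sum, sum_min_aux, min_eq_left hT]
          omega

theorem stmt5 (k s y : ℕ) (hk : 2 ≤ k) (hs : 1 ≤ s) (hy : 0 < y)
    (hyev : ¬ Oddoid k y) (hlt : y < k ^ s) :
    ∃ f : Fin k → ℕ,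
      (∀ i, Oddoid k (f i) ∧ f i < k ^ (s - 1)) ∧ ∑ i, f i = y := by
  unfold Oddoid at hyev
  push_neg at hyev
  set m := k * (k - 1) with hm
  have hm2 : k * k = k + m := by
    cases k with
    | zero => simp [hm]
    | succ j => simp [hm, Nat.succ_sub_one]; ring
  have hmk : k ≤ m := by nlinarith
  have hr : y % m = 0 ∨ k ≤ y % m := by
    rcases Nat.eq_zero_or_pos (y % m) with h | h
    · left; exact h
    · right; have := hyev h; omega
  rcases eq_or_lt_of_le hs with hs1 | hs2
  · exfalso
    have hks : k ^ s = k := by rw [← hs1]; simp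
    rw [hks] at hlt
    rw [Nat.mod_eq_of_lt (lt_of_lt_of_le hlt hmk)] at hr
    omega
  · obtain ⟨c, hc⟩ := pow_aux k (by omega) (s-1) (by omega)
    rw [← hm] at hc
    have hks : k ^ s = k * k ^ (s-1) := by
      conv_lhs => rw [show s = (s-1)+1 by omega]
      ring
    rw [hc] at hks
    have hm0 : 0 < m := by omega
    have hdm : y = m * (y / m) + y % m := (Nat.div_add_mod y m).symm
    have hrm : y % m < m := Nat.mod_lt _ hm0
    rcases hr with h0 | hk'
    · -- r = 0
      set q := y / m with hq
      have hq1 : 1 ≤ q := by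
        rcases Nat.eq_zero_or_pos q with h | h
        · rw [h] at hdm; omega
        · exact h
      have hmq : m * q = m * (q-1) + m := by
        conv_lhs => rw [show q = (q-1)+1 by omega]
        rw [Nat.mul_succ]
      have hT : q - 1 ≤ c * k := by
        by_contra hcon
        push_neg at hcon
        have h1 : m * (c*k+2) ≤ m * q := Nat.mul_le_mul_left m (by omega)
        nlinarith
      exact build k y m c (q-1) m (k^(s-1)) (fun _ => k-1) hk hm
        (fun i _ => by show 1 ≤ k - 1 ∧ k - 1 ≤ k - 1; omega)
        (by rw [Finset.sum_const, Finset.card_range, smul_eq_mul])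
        (by omega) hT hc
    · -- k ≤ r < m
      set r := y % m with hrdef
      set d := r - k with hd
      have hdk : d ≤ (k-2) * k := by
        have : (k-2) * k + 2 * k = k * k := by
          have h2k : 2 * k ≤ k * k := by nlinarith
          have := Nat.sub_mul k 2 k
          omega
        omega
      have hT : y / m ≤ c * k := by
        by_contra hcon
        push_neg at hcon
        have h1 : m * (c*k+1) ≤ m * (y/m) := Nat.mul_le_mul_left m (by omega)
        nlinarith
      exact build k y m c (y/m) r (k^(s-1)) (fun i => 1 + min (k-2) (d - (k-2)*i)) hk hm
        (fun i hi => by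
          show 1 ≤ 1 + min (k-2) (d - (k-2)*i) ∧ 1 + min (k-2) (d - (k-2)*i) ≤ k - 1
          have := min_le_left (k-2) (d - (k-2)*i)
          omega)
        (by
          rw [Finset.sum_add_distrib, Finset.sum_const, Finset.card_range, smul_eq_mul,
            sum_min_aux, min_eq_left hdk]
          omega)
        (by omega) hT hc
end

section
/- Define an ABO-delete Nim position with n ≥ 2 heaps as a multiset (or vector) of n positive integers. A move consists of choosing one heap of size z, deleting all other heaps, and replacing the chosen heap by n positive integers summing to z. Using the inductive definition that a position is a P-position iff every option is an N-position (a position with no options is a P-position), a position ⟨z₁,…,z_n⟩ is a P-position if and only if for every i, the remainder of z_i modulo n(n−1) lies between 1 and n−1 (inclusive). -/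
/-- `NPos Move p`: the player to move at `p` has a winning strategy, i.e. some
option of `p` is a `P`-position (all of whose options are `N`-positions). -/
inductive NPos {α : Type*} (Move : α → α → Prop) : α → Prop
  | intro {p q : α} : Move p q → (∀ r, Move q r → NPos Move r) → NPos Move p

/-- `PPos Move p`: every option of `p` is an `N`-position (in particular,
positions without options are `P`-positions). -/
def PPos {α : Type*} (Move : α → α → Prop) (p : α) : Prop :=
  ∀ q, Move p q → NPos Move q

/-- A move of ABO-delete Nim with `n` heaps: choose one heap of size `z`,
delete all the other heaps, and replace the chosen heap by `n` positive
integers summing to `z`. -/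
def ABOMove (n : ℕ) (p q : Multiset ℕ) : Prop :=
  Multiset.card q = n ∧ (∀ x ∈ q, 0 < x) ∧ ∃ z ∈ p, q.sum = z

def Good (n x : ℕ) : Prop := 1 ≤ x % (n * (n - 1)) ∧ x % (n * (n - 1)) ≤ n - 1

lemma good_of_small {n x : ℕ} (hn : 2 ≤ n) (h1 : 1 ≤ x) (h2 : x ≤ n - 1) : Good n x := by
  have h3 : 2 * (n - 1) ≤ n * (n - 1) := Nat.mul_le_mul_right _ hn
  have hx : x < n * (n - 1) := by omega
  exact ⟨by rw [Nat.mod_eq_of_lt hx]; omega, by rw [Nat.mod_eq_of_lt hx]; omega⟩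

lemma sum_not_good {n : ℕ} (hn : 2 ≤ n) {q : Multiset ℕ}
    (hcard : Multiset.card q = n) (hg : ∀ x ∈ q, Good n x) : ¬ Good n q.sum := by
  have h3 : 2 * (n - 1) ≤ n * (n - 1) := Nat.mul_le_mul_right _ hn
  have hmod : q.sum % (n * (n - 1)) = (q.map (· % (n * (n - 1)))).sum % (n * (n - 1)) :=
    Multiset.sum_nat_mod q _
  have hcard' : Multiset.card (q.map (· % (n * (n - 1)))) = n := by simp [hcard]
  have hR1 : n * 1 ≤ (q.map (· % (n * (n - 1)))).sum := by
    have := Multiset.card_nsmul_le_sum (s := q.map (· % (n * (n - 1)))) (a := 1) ?_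
    · simpa [hcard'] using this
    · intro y hy
      obtain ⟨x, hx, rfl⟩ := Multiset.mem_map.mp hy
      exact (hg x hx).1
  have hR2 : (q.map (· % (n * (n - 1)))).sum ≤ n * (n - 1) := by
    have := Multiset.sum_le_card_nsmul (q.map (· % (n * (n - 1)))) (n - 1) ?_
    · simpa [hcard'] using this
    · intro y hy
      obtain ⟨x, hx, rfl⟩ := Multiset.mem_map.mp hy
      exact (hg x hx).2
  have hn1 : n * 1 = n := Nat.mul_one n
  rcases eq_or_lt_of_le hR2 with h | h
  · rw [h, Nat.mod_self] at hmod
    intro hGood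
    have h1 := hGood.1
    omega
  · rw [Nat.mod_eq_of_lt h] at hmod
    intro hGood
    have h2 := hGood.2
    omega

lemma build_split {n w S : ℕ} (hn : 2 ≤ n) (hS1 : n ≤ S) (hS2 : S ≤ n * (n - 1))
    (hSw : S ≤ w) (hdvd : n * (n - 1) ∣ (w - S)) :
    ∃ r : Multiset ℕ, Multiset.card r = n ∧ (∀ x ∈ r, 0 < x) ∧ r.sum = w ∧
      ∀ x ∈ r, Good n x := by
  have h3 : 2 * (n - 1) ≤ n * (n - 1) := Nat.mul_le_mul_right _ hn
  obtain ⟨a, ha⟩ : ∃ a, a = (S - 1) / (n - 1) := ⟨_, rfl⟩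
  have hdm : (n - 1) * ((S - 1) / (n - 1)) + (S - 1) % (n - 1) = S - 1 :=
    Nat.div_add_mod _ _
  have hrem : (S - 1) % (n - 1) < n - 1 := Nat.mod_lt _ (by omega)
  have ha1 : 1 ≤ a := by
    rw [ha]
    exact (Nat.one_le_div_iff (by omega)).mpr (by omega)
  have ha2 : a < n := by
    rw [ha]
    exact (Nat.div_lt_iff_lt_mul (by omega)).mpr (by omega)
  rw [← ha] at hdm
  obtain ⟨k, hk⟩ := hdvd
  have hPle : (n - 1) * a ≤ S - 1 := by omega
  refine ⟨Multiset.replicate (n - 1) a + {w - (n - 1) * a}, ?_, ?_, ?_, ?_⟩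
  · rw [Multiset.card_add, Multiset.card_replicate, Multiset.card_singleton]
    omega
  · intro x hx
    rw [Multiset.mem_add] at hx
    rcases hx with hx | hx
    · rw [Multiset.eq_of_mem_replicate hx]; omega
    · rw [Multiset.mem_singleton] at hx; omega
  · rw [Multiset.sum_add, Multiset.sum_replicate, Multiset.sum_singleton, smul_eq_mul]
    omega
  · have hcmod : (w - (n - 1) * a) % (n * (n - 1)) = S - (n - 1) * a := by
      rw [show w - (n - 1) * a = n * (n - 1) * k + (S - (n - 1) * a) by omega,
        Nat.mul_add_mod, Nat.mod_eq_of_lt (by omega)]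
    intro x hx
    rw [Multiset.mem_add] at hx
    rcases hx with hx | hx
    · rw [Multiset.eq_of_mem_replicate hx]
      exact good_of_small hn ha1 (by omega)
    · rw [Multiset.mem_singleton] at hx
      subst hx
      exact ⟨by omega, by omega⟩

lemma exists_good_split {n w : ℕ} (hn : 2 ≤ n) (hw : n ≤ w) (hng : ¬ Good n w) :
    ∃ r : Multiset ℕ, Multiset.card r = n ∧ (∀ x ∈ r, 0 < x) ∧ r.sum = w ∧
      ∀ x ∈ r, Good n x := by
  have h3 : 2 * (n - 1) ≤ n * (n - 1) := Nat.mul_le_mul_right _ hn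
  have htlt : w % (n * (n - 1)) < n * (n - 1) := Nat.mod_lt _ (by omega)
  have hdm0 : n * (n - 1) * (w / (n * (n - 1))) + w % (n * (n - 1)) = w :=
    Nat.div_add_mod w _
  have hts : w % (n * (n - 1)) = 0 ∨ n ≤ w % (n * (n - 1)) := by
    by_contra h
    push_neg at h
    exact hng ⟨by omega, by omega⟩
  rcases hts with h | h
  · have hMw : n * (n - 1) ≤ w :=
      Nat.le_of_dvd (by omega) (Nat.dvd_of_mod_eq_zero h)
    exact build_split hn (by omega) le_rfl hMw
      (Nat.dvd_sub (Nat.dvd_of_mod_eq_zero h) dvd_rfl)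
  · exact build_split hn h (by omega) (Nat.mod_le w _) ⟨w / (n * (n - 1)), by omega⟩

lemma mem_lt_sum {n : ℕ} (hn : 2 ≤ n) {p : Multiset ℕ} (hcard : Multiset.card p = n)
    (hpos : ∀ x ∈ p, 0 < x) {z : ℕ} (hz : z ∈ p) : z < p.sum := by
  obtain ⟨t, rfl⟩ := Multiset.exists_cons_of_mem hz
  rw [Multiset.sum_cons]
  have hct : Multiset.card t = n - 1 := by
    rw [Multiset.card_cons] at hcard; omega
  have htne : t ≠ 0 := by
    intro h
    rw [h, Multiset.card_zero] at hct
    omega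
  obtain ⟨y, hy⟩ := Multiset.exists_mem_of_ne_zero htne
  have h1 : 0 < y := hpos y (Multiset.mem_cons_of_mem hy)
  have h2 : y ≤ t.sum := Multiset.single_le_sum (fun x _ => Nat.zero_le x) y hy
  omega

lemma ppos_of_good {n : ℕ} (hn : 2 ≤ n) :
    ∀ s, ∀ p : Multiset ℕ, Multiset.card p = n → (∀ x ∈ p, 0 < x) → p.sum ≤ s →
      (∀ x ∈ p, Good n x) → PPos (ABOMove n) p := by
  intro s
  induction s with
  | zero =>
    intro p hc hp hs _
    obtain ⟨y, hy⟩ := Multiset.exists_mem_of_ne_zero (s := p)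
      (by intro h; rw [h, Multiset.card_zero] at hc; omega)
    have := Multiset.single_le_sum (fun x _ => Nat.zero_le x) y hy
    have := hp y hy
    omega
  | succ s ih =>
    intro p hc hp hs hg q hq
    obtain ⟨hqc, hqpos, z, hz, hqs⟩ := hq
    have hzg := hg z hz
    have hzlt : z < p.sum := mem_lt_sum hn hc hp hz
    have hne : ∃ w ∈ q, ¬ Good n w := by
      by_contra h
      push_neg at h
      exact sum_not_good hn hqc h (hqs ▸ hzg)
    obtain ⟨w, hw, hwng⟩ := hne
    have hwn : n ≤ w := by
      by_contra h
      push_neg at h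
      have := hqpos w hw
      exact hwng (good_of_small hn (by omega) (by omega))
    obtain ⟨r, hrc, hrpos, hrs, hrg⟩ := exists_good_split hn hwn hwng
    have hwlt : w < q.sum := mem_lt_sum hn hqc hqpos hw
    exact NPos.intro ⟨hrc, hrpos, w, hw, hrs⟩ (ih r hrc hrpos (by omega) hrg)

lemma not_ppos_and_npos {n : ℕ} (hn : 2 ≤ n) :
    ∀ s, ∀ p : Multiset ℕ, Multiset.card p = n → (∀ x ∈ p, 0 < x) → p.sum ≤ s →
      PPos (ABOMove n) p → NPos (ABOMove n) p → False := by
  intro s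
  induction s with
  | zero =>
    intro p hc hp hs _ _
    obtain ⟨y, hy⟩ := Multiset.exists_mem_of_ne_zero (s := p)
      (by intro h; rw [h, Multiset.card_zero] at hc; omega)
    have := Multiset.single_le_sum (fun x _ => Nat.zero_le x) y hy
    have := hp y hy
    omega
  | succ s ih =>
    intro p hc hp hs hP hN
    obtain ⟨hmv, hnext⟩ := hN
    rename_i q
    obtain ⟨hqc, hqpos, z, hz, hqs⟩ := hmv
    have hzlt : z < p.sum := mem_lt_sum hn hc hp hz
    exact ih q hqc hqpos (by omega) hnext (hP q ⟨hqc, hqpos, z, hz, hqs⟩)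

theorem stmt7 (n : ℕ) (hn : 2 ≤ n) (Z : Multiset ℕ)
    (hcard : Multiset.card Z = n) (hpos : ∀ x ∈ Z, 0 < x) :
    PPos (ABOMove n) Z ↔
      ∀ x ∈ Z, 1 ≤ x % (n * (n - 1)) ∧ x % (n * (n - 1)) ≤ n - 1 := by
  constructor
  · intro hP x hx
    by_contra hng
    have hng' : ¬ Good n x := hng
    have hxn : n ≤ x := by
      by_contra h
      push_neg at h
      have := hpos x hx
      exact hng' (good_of_small hn (by omega) (by omega))
    obtain ⟨r, hrc, hrpos, hrs, hrg⟩ := exists_good_split hn hxn hng'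
    have hPr : PPos (ABOMove n) r := ppos_of_good hn r.sum r hrc hrpos le_rfl hrg
    have hNr : NPos (ABOMove n) r := hP r ⟨hrc, hrpos, x, hx, hrs⟩
    exact not_ppos_and_npos hn r.sum r hrc hrpos le_rfl hPr hNr
  · intro hg
    exact ppos_of_good hn Z.sum Z hcard hpos le_rfl (fun x hx => hg x hx)
end

section
/- Define NMTH-delete Nim positions with an even number n = 2m ≥ 2 of heaps as vectors of n positive integers; a move chooses k ≤ n/2, deletes k heaps, and splits k of the remaining heaps each into two positive parts. With P-positions defined inductively (a position is P iff all options are N; terminal positions are P), a position is a P-position if and only if every heap size is odd. -/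
/-- A move of NMTH-delete Nim with `n` heaps: choose `k` with `1 ≤ k` and
`k ≤ n / 2` (i.e. `2 * k ≤ n`), delete `k` heaps (`d`), and split `k` of the
remaining heaps (recorded in `L` as pairs of positive parts), leaving the
rest (`u`) untouched. -/
def NMTHMove (n : ℕ) (p q : Multiset ℕ) : Prop :=
  ∃ (k : ℕ) (d u : Multiset ℕ) (L : Multiset (ℕ × ℕ)),
    1 ≤ k ∧ 2 * k ≤ n ∧
    Multiset.card d = k ∧ Multiset.card L = k ∧
    (∀ e ∈ L, 0 < e.1 ∧ 0 < e.2) ∧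
    p = d + u + L.map (fun e => e.1 + e.2) ∧
    q = u + L.map Prod.fst + L.map Prod.snd

theorem NPos.not_ppos {α : Type*} {Move : α → α → Prop} {p : α} (h : NPos Move p) :
    ¬ PPos Move p := by
  induction h with
  | intro hpq _ ih =>
    intro hp
    obtain ⟨hqr, hr⟩ := hp _ hpq
    exact ih _ hqr hr

theorem ppos_iff_of_kernel {α : Type*} {Move : α → α → Prop} (V S : α → Prop) (μ : α → ℕ)
    (hV : ∀ ⦃p q⦄, V p → Move p q → V q ∧ μ q < μ p)
    (hindep : ∀ ⦃p q⦄, S p → Move p q → ¬ S q)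
    (habsorb : ∀ ⦃p⦄, V p → ¬ S p → ∃ q, Move p q ∧ S q) {p : α} (hp : V p) :
    PPos Move p ↔ S p := by
  have key : (S p → PPos Move p) ∧ (¬ S p → NPos Move p) := by
    induction hn : μ p using Nat.strong_induction_on generalizing p with
    | _ n ih =>
      subst hn
      refine ⟨fun hS q hpq => ?_, fun hS => ?_⟩
      · obtain ⟨hq, hlt⟩ := hV hp hpq
        exact (ih _ hlt hq rfl).2 (hindep hS hpq)
      · obtain ⟨q, hpq, hSq⟩ := habsorb hp hS
        obtain ⟨hq, hlt⟩ := hV hp hpq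
        exact NPos.intro hpq ((ih _ hlt hq rfl).1 hSq)
  exact ⟨fun hP => by_contra fun hS => (key.2 hS).not_ppos hP, key.1⟩

theorem Multiset.exists_le_card_eq {α : Type*} {s : Multiset α} {n : ℕ} (h : n ≤ card s) :
    ∃ t ≤ s, card t = n := by
  obtain ⟨t, ht⟩ := card_pos_iff_exists_mem.1 <| by
    rw [card_powersetCard]; exact Nat.choose_pos h
  exact ⟨t, mem_powersetCard.1 ht⟩

open Multiset

namespace NMTHMove

variable {n : ℕ} {p q : Multiset ℕ}

theorem card_eq (h : NMTHMove n p q) : card q = card p := by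
  obtain ⟨k, d, u, L, -, -, hd, hL, -, rfl, rfl⟩ := h
  simp only [card_add, card_map, hd, hL]
  omega

theorem pos (hpos : ∀ x ∈ p, 0 < x) (h : NMTHMove n p q) : ∀ y ∈ q, 0 < y := by
  obtain ⟨k, d, u, L, -, -, -, -, hL, rfl, rfl⟩ := h
  simp only [mem_add, mem_map]
  rintro y ((hy | ⟨e, he, rfl⟩) | ⟨e, he, rfl⟩)
  · exact hpos y (by simp [hy])
  · exact (hL e he).1
  · exact (hL e he).2

theorem sum_lt (hpos : ∀ x ∈ p, 0 < x) (h : NMTHMove n p q) : q.sum < p.sum := by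
  obtain ⟨k, d, u, L, hk, -, hd, -, -, rfl, rfl⟩ := h
  obtain ⟨x, hx⟩ := card_pos_iff_exists_mem.1 (hd ▸ hk)
  have hx_pos : 0 < x := hpos x (by simp [hx])
  have hsplit : (L.map fun e => e.1 + e.2).sum = (L.map Prod.fst).sum + (L.map Prod.snd).sum :=
    sum_map_add
  have := le_sum_of_mem hx
  simp only [sum_add, hsplit]
  omega

theorem not_forall_odd (hodd : ∀ x ∈ p, Odd x) (h : NMTHMove n p q) : ¬ ∀ y ∈ q, Odd y := by
  obtain ⟨k, d, u, L, hk, -, -, hL, -, rfl, rfl⟩ := h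
  obtain ⟨e, he⟩ := card_pos_iff_exists_mem.1 (hL ▸ hk)
  have hsum : Odd (e.1 + e.2) := hodd _ (mem_add.2 <| .inr <| mem_map_of_mem _ he)
  by_cases h1 : Odd e.1
  · exact fun hq => Nat.not_odd_iff_even.2 (Nat.odd_add.1 hsum |>.1 h1)
      (hq _ (mem_add.2 <| .inr <| mem_map_of_mem _ he))
  · exact fun hq => h1 (hq _ (mem_add.2 <| .inl <| mem_add.2 <| .inr <| mem_map_of_mem _ he))

end NMTHMove

theorem nmthMove_split_one {n : ℕ} {d u S : Multiset ℕ} (hS : 1 ≤ card S) (hn : 2 * card S ≤ n)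
    (hd : card d = card S) (hS2 : ∀ z ∈ S, 2 ≤ z) :
    NMTHMove n (d + u + S) (u + S.map (fun _ => 1) + S.map (· - 1)) := by
  refine ⟨card S, d, u, S.map fun z => (1, z - 1), hS, hn, hd, card_map _ _, ?_, ?_, ?_⟩
  · simp only [mem_map]
    rintro _ ⟨z, hz, rfl⟩
    have := hS2 z hz
    exact ⟨one_pos, by omega⟩
  · congr 1
    rw [map_map]
    refine (map_congr rfl fun z hz => ?_).trans (map_id S) |>.symm
    have := hS2 z hz
    simp only [Function.comp_apply, id]
    omega
  · simp only [map_map]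
    rfl

theorem exists_nmthMove_forall_odd {m : ℕ} {p : Multiset ℕ} (hcard : card p = 2 * m)
    (hpos : ∀ x ∈ p, 0 < x) (hev : ¬ ∀ x ∈ p, Odd x) :
    ∃ q, NMTHMove (2 * m) p q ∧ ∀ y ∈ q, Odd y := by
  classical
  set O := p.filter Odd
  set E := p.filter fun x => ¬ Odd x
  have hp : O + E = p := filter_add_not _ p
  have hOE : card O + card E = 2 * m := by rw [← card_add, hp, hcard]
  have hE : ∀ z ∈ E, Odd (z - 1) ∧ 2 ≤ z := by
    intro z hz
    obtain ⟨hzp, hz⟩ := mem_filter.1 hz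
    obtain ⟨r, rfl⟩ := Nat.not_odd_iff_even.1 hz
    have := hpos _ hzp
    exact ⟨⟨r - 1, by omega⟩, by omega⟩
  have hE1 : 1 ≤ card E := by
    simp only [not_forall] at hev
    obtain ⟨x, hx, hxe⟩ := hev
    exact card_pos_iff_exists_mem.2 ⟨x, mem_filter.2 ⟨hx, hxe⟩⟩
  suffices ∃ d u S, p = d + u + S ∧ S ≤ E ∧ (∀ x ∈ u, Odd x) ∧
      1 ≤ card S ∧ 2 * card S ≤ 2 * m ∧ card d = card S by
    obtain ⟨d, u, S, rfl, hSE, hu, hS1, hSm, hd⟩ := this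
    refine ⟨_, nmthMove_split_one hS1 hSm hd fun z hz => (hE z (mem_of_le hSE hz)).2, ?_⟩
    simp only [mem_add, mem_map]
    rintro y ((hy | ⟨z, -, rfl⟩) | ⟨z, hz, rfl⟩)
    · exact hu y hy
    · exact odd_one
    · exact (hE z (mem_of_le hSE hz)).1
  rcases le_or_gt (card E) m with hEm | hmE
  · -- split every even heap and delete as many odd ones
    obtain ⟨t, htO, htc⟩ := exists_le_card_eq (s := O) (n := card E) (by omega)
    exact ⟨t, O - t, E, by rw [add_tsub_cancel_of_le htO, hp], le_rfl,
      fun x hx => of_mem_filter (mem_of_le tsub_le_self hx), hE1, by omega, htc⟩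
  · -- split `m` even heaps and delete the other `m` heaps
    obtain ⟨S, hSE, hSc⟩ := exists_le_card_eq (s := E) (n := m) hmE.le
    have hSp : S ≤ p := hSE.trans (hp ▸ le_add_left _ _)
    exact ⟨p - S, 0, S, by rw [add_zero, tsub_add_cancel_of_le hSp], hSE, by simp,
      by omega, by omega, by rw [card_sub hSp]; omega⟩

theorem stmt11_general (m : ℕ) (Z : Multiset ℕ)
    (hcard : Multiset.card Z = 2 * m) (hpos : ∀ x ∈ Z, 0 < x) :
    PPos (NMTHMove (2 * m)) Z ↔ ∀ x ∈ Z, Odd x :=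
  ppos_iff_of_kernel (fun p => card p = 2 * m ∧ ∀ x ∈ p, 0 < x) (fun p => ∀ x ∈ p, Odd x) sum
    (fun _ _ ⟨hcard, hpos⟩ h => ⟨⟨h.card_eq.trans hcard, h.pos hpos⟩, h.sum_lt hpos⟩)
    (fun _ _ hodd h => h.not_forall_odd hodd)
    (fun _ ⟨hcard, hpos⟩ hev => exists_nmthMove_forall_odd hcard hpos hev)
    ⟨hcard, hpos⟩

theorem stmt11 (m : ℕ) (hm : 1 ≤ m) (Z : Multiset ℕ)
    (hcard : Multiset.card Z = 2 * m) (hpos : ∀ x ∈ Z, 0 < x) :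
    PPos (NMTHMove (2 * m)) Z ↔ ∀ x ∈ Z, Odd x :=
  stmt11_general m Z hcard hpos
end

section
/- Define Single-delete Nim with 3 heaps: positions are triples ⟨x, y, z⟩ of positive integers; a move deletes one heap and splits one of the two remaining heaps into two positive parts. With P-positions defined inductively, where ⟨1,1,1⟩ is the only terminal position and is a P-position, the position ⟨x, y, z⟩ is a P-position if and only if v₂(x) = v₂(y) = v₂(z). -/
/-- A move of Single-delete Nim with `3` heaps: delete one heap `d`, keep one
heap `u`, and split the third heap into two positive parts `x` and `y`. -/
def SD3Move (p q : Multiset ℕ) : Prop :=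
  ∃ d u x y : ℕ, 0 < x ∧ 0 < y ∧ p = {d, u, x + y} ∧ q = {u, x, y}

namespace SD3aux

lemma val_mul_odd (v m : ℕ) (hm : Odd m) : padicValNat 2 (2 ^ v * m) = v := by
  have hm0 : m ≠ 0 := by rintro rfl; simp at hm
  rw [padicValNat.mul (pow_ne_zero _ two_ne_zero) hm0, padicValNat.prime_pow,
    padicValNat.eq_zero_of_not_dvd, add_zero]
  have := Nat.odd_iff.mp hm
  omega

lemma exists_odd_part (n : ℕ) (hn : n ≠ 0) :
    ∃ m, Odd m ∧ n = 2 ^ padicValNat 2 n * m := by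
  obtain ⟨m, hm⟩ := pow_padicValNat_dvd (p := 2) (n := n)
  refine ⟨m, ?_, hm⟩
  by_contra h
  rw [Nat.not_odd_iff_even] at h
  obtain ⟨k, hk⟩ := h
  have hgoal : n = 2 ^ (padicValNat 2 n + 1) * k := by
    conv_lhs => rw [hm, hk]
    rw [pow_succ]; ring
  exact pow_succ_padicValNat_not_dvd (p := 2) hn ⟨k, hgoal⟩

lemma val_add_gt {a b v : ℕ} (ha : a ≠ 0) (hb : b ≠ 0)
    (h1 : padicValNat 2 a = v) (h2 : padicValNat 2 b = v) :
    v < padicValNat 2 (a + b) := by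
  obtain ⟨m, hm, hma⟩ := exists_odd_part a ha
  obtain ⟨k, hk, hkb⟩ := exists_odd_part b hb
  rw [h1] at hma; rw [h2] at hkb
  obtain ⟨t, ht⟩ := hm.add_odd hk
  have hab : a + b = 2 ^ (v + 1) * t := by rw [hma, hkb, ← Nat.mul_add, ht]; ring
  have hd : (2 : ℕ) ^ (v + 1) ∣ a + b := ⟨t, hab⟩
  have hab0 : a + b ≠ 0 := by positivity
  have := (padicValNat_dvd_iff_le hab0).mp hd
  omega

lemma exists_split {w v : ℕ} (hw : w ≠ 0) (h : v < padicValNat 2 w) :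
    ∃ a b, 0 < a ∧ 0 < b ∧ a + b = w ∧ padicValNat 2 a = v ∧ padicValNat 2 b = v := by
  obtain ⟨t, ht⟩ := (padicValNat_dvd_iff_le hw).mpr h
  have ht0 : 0 < t := by
    rcases Nat.eq_zero_or_pos t with h0 | h0
    · subst h0; simp at ht; omega
    · exact h0
  refine ⟨2 ^ v, 2 ^ v * (2 * t - 1), pow_pos two_pos v, Nat.mul_pos (pow_pos two_pos v) (by omega), ?_, ?_, ?_⟩
  · have : 2 * t - 1 + 1 = 2 * t := by omega
    calc 2 ^ v + 2 ^ v * (2 * t - 1) = 2 ^ v * (2 * t - 1 + 1) := by ring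
    _ = 2 ^ (v + 1) * t := by rw [this]; ring
    _ = w := ht.symm
  · simpa using val_mul_odd v 1 odd_one
  · exact val_mul_odd v (2 * t - 1) (Nat.odd_iff.mpr (by omega))

def Good (s : Multiset ℕ) : Prop := ∃ v, ∀ n ∈ s, padicValNat 2 n = v

lemma move_card {s q : Multiset ℕ} (h : SD3Move s q) : Multiset.card q = 3 := by
  obtain ⟨d, u, a, b, _, _, _, rfl⟩ := h; rfl

lemma move_pos {s q : Multiset ℕ} (hpos : ∀ n ∈ s, 0 < n) (h : SD3Move s q) :
    ∀ n ∈ q, 0 < n := by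
  obtain ⟨d, u, a, b, ha, hb, rfl, rfl⟩ := h
  intro n hn
  simp only [Multiset.insert_eq_cons, Multiset.mem_cons, Multiset.mem_singleton] at hn
  rcases hn with rfl | rfl | rfl
  · exact hpos n (by simp)
  · exact ha
  · exact hb

lemma move_sum {s q : Multiset ℕ} (hpos : ∀ n ∈ s, 0 < n) (h : SD3Move s q) :
    q.sum < s.sum := by
  obtain ⟨d, u, a, b, ha, hb, rfl, rfl⟩ := h
  have hd : 0 < d := hpos d (by simp)
  simp only [Multiset.insert_eq_cons, Multiset.sum_cons, Multiset.sum_singleton]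
  omega

lemma move_not_good {s q : Multiset ℕ} (hpos : ∀ n ∈ s, 0 < n) (hs : Good s)
    (h : SD3Move s q) : ¬ Good q := by
  obtain ⟨d, u, a, b, ha, hb, rfl, rfl⟩ := h
  obtain ⟨v, hv⟩ := hs
  rintro ⟨v', hv'⟩
  have hu : padicValNat 2 u = v := hv u (by simp)
  have hab : padicValNat 2 (a + b) = v := hv (a + b) (by simp)
  have hu' : padicValNat 2 u = v' := hv' u (by simp)
  have ha' : padicValNat 2 a = v' := hv' a (by simp)
  have hb' : padicValNat 2 b = v' := hv' b (by simp)
  have := val_add_gt ha.ne' hb.ne' ha' hb'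
  omega

lemma core {d u w : ℕ} (hw : w ≠ 0) (hu : padicValNat 2 u < padicValNat 2 w) :
    ∃ q, SD3Move {d, u, w} q ∧ Good q := by
  obtain ⟨a, b, ha, hb, hab, hva, hvb⟩ := exists_split hw hu
  refine ⟨{u, a, b}, ⟨d, u, a, b, ha, hb, by rw [hab], rfl⟩, padicValNat 2 u, ?_⟩
  intro n hn
  simp only [Multiset.insert_eq_cons, Multiset.mem_cons, Multiset.mem_singleton] at hn
  rcases hn with rfl | rfl | rfl
  · rfl
  · exact hva
  · exact hvb

lemma perm3a (x y z : ℕ) : ({x, y, z} : Multiset ℕ) = {z, x, y} := by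
  show x ::ₘ y ::ₘ z ::ₘ 0 = z ::ₘ x ::ₘ y ::ₘ 0
  rw [Multiset.cons_swap y z, Multiset.cons_swap x z]

lemma perm3b (x y z : ℕ) : ({x, y, z} : Multiset ℕ) = {x, z, y} := by
  show x ::ₘ y ::ₘ z ::ₘ 0 = x ::ₘ z ::ₘ y ::ₘ 0
  rw [Multiset.cons_swap y z]

lemma perm3c (x y z : ℕ) : ({x, y, z} : Multiset ℕ) = {z, y, x} := by
  show x ::ₘ y ::ₘ z ::ₘ 0 = z ::ₘ y ::ₘ x ::ₘ 0
  rw [Multiset.cons_swap x y, Multiset.cons_swap x z, Multiset.cons_swap y z]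

lemma bad_has_good_move {s : Multiset ℕ} (hpos : ∀ n ∈ s, 0 < n)
    (hcard : Multiset.card s = 3) (hbad : ¬ Good s) :
    ∃ q, SD3Move s q ∧ Good q := by
  obtain ⟨x, y, z, rfl⟩ := Multiset.card_eq_three.mp hcard
  have hx : x ≠ 0 := (hpos x (by simp)).ne'
  have hy : y ≠ 0 := (hpos y (by simp)).ne'
  have hz : z ≠ 0 := (hpos z (by simp)).ne'
  have hne : padicValNat 2 x ≠ padicValNat 2 y ∨ padicValNat 2 y ≠ padicValNat 2 z := by
    by_contra h
    push_neg at h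
    refine hbad ⟨padicValNat 2 x, fun n hn => ?_⟩
    simp only [Multiset.insert_eq_cons, Multiset.mem_cons, Multiset.mem_singleton] at hn
    rcases hn with rfl | rfl | rfl
    · rfl
    · exact h.1.symm
    · omega
  rcases hne with h | h
  · rcases h.lt_or_gt with h | h
    · rw [perm3a x y z]
      exact core hy h
    · rw [perm3c x y z]
      exact core hx h
  · rcases h.lt_or_gt with h | h
    · exact core hz h
    · rw [perm3b x y z]
      exact core hy h

lemma main : ∀ N (s : Multiset ℕ), s.sum = N → (∀ n ∈ s, 0 < n) →
    Multiset.card s = 3 → (PPos SD3Move s ↔ Good s) := by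
  intro N
  induction N using Nat.strong_induction_on with
  | _ N ih =>
  rintro s rfl hpos hcard
  constructor
  · intro hP
    by_contra hbad
    obtain ⟨q, hmove, hqgood⟩ := bad_has_good_move hpos hcard hbad
    have hN := hP q hmove
    obtain ⟨r, hqr, hr⟩ : ∃ r, SD3Move q r ∧ PPos SD3Move r := by
      cases hN with
      | intro h1 h2 => exact ⟨_, h1, h2⟩
    have hqpos := move_pos hpos hmove
    have hrbad : ¬ Good r := move_not_good hqpos hqgood hqr
    have hlt : r.sum < s.sum := by
      have := move_sum hpos hmove
      have := move_sum hqpos hqr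
      omega
    exact hrbad ((ih r.sum hlt r rfl (move_pos hqpos hqr) (move_card hqr)).mp hr)
  · intro hgood q hq
    have hqbad := move_not_good hpos hgood hq
    have hqpos := move_pos hpos hq
    obtain ⟨r, hqr, hrgood⟩ := bad_has_good_move hqpos (move_card hq) hqbad
    have hlt : r.sum < s.sum := by
      have := move_sum hpos hq
      have := move_sum hqpos hqr
      omega
    have hrP : PPos SD3Move r :=
      (ih r.sum hlt r rfl (move_pos hqpos hqr) (move_card hqr)).mpr hrgood
    exact NPos.intro hqr hrP

end SD3aux

theorem stmt17 (x y z : ℕ) (hx : 0 < x) (hy : 0 < y) (hz : 0 < z) :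
    PPos SD3Move {x, y, z} ↔
      padicValNat 2 x = padicValNat 2 y ∧ padicValNat 2 y = padicValNat 2 z := by
  have hpos : ∀ n ∈ ({x, y, z} : Multiset ℕ), 0 < n := by
    intro n hn
    simp only [Multiset.insert_eq_cons, Multiset.mem_cons, Multiset.mem_singleton] at hn
    rcases hn with rfl | rfl | rfl <;> assumption
  rw [SD3aux.main _ _ rfl hpos (by rfl)]
  constructor
  · rintro ⟨v, hv⟩
    have h1 := hv x (by simp)
    have h2 := hv y (by simp)
    have h3 := hv z (by simp)
    omega
  · rintro ⟨h1, h2⟩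
    refine ⟨padicValNat 2 x, fun n hn => ?_⟩
    simp only [Multiset.insert_eq_cons, Multiset.mem_cons, Multiset.mem_singleton] at hn
    rcases hn with rfl | rfl | rfl
    · rfl
    · omega
    · omega
end
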